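/- arXiv:2207.05985 — 3 statements merged into one kernel-verified Lean document; each statement's English description precedes it below -/
import Mathlib

section
/- Let o : {0,1}^n → {0,1}^n be defined by o(v) = M(v ⊕ s) over GF(2), where M = P A Pᵀ for a permutation matrix P, an invertible upper-triangular matrix A over GF(2), and a fixed vector s. Then o is a valid hypercube orientation, i.e., for all v and all i, o(v)_i ≠ o(v ⊕ e_i)_i. -/
open Matrix

/-!
Flipping coordinate `i` changes `M (v + s)` by the `i`-th column of `M`, so the `i`-th outmap
coordinate flips exactly when `M i i ≠ 0`. Conjugating by a permutation matrix only permutes the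
diagonal, and an invertible upper-triangular matrix has unit diagonal entries because its
determinant is their product.
-/

namespace Matrix

variable {ι R : Type*} [Fintype ι] [DecidableEq ι]

theorem isUnit_diag_of_isUnit_of_isUpperTriangular [CommRing R] [LinearOrder ι]
    {A : Matrix ι ι R} (hA : IsUnit A) (hupper : A.IsUpperTriangular) (i : ι) :
    IsUnit (A i i) := by
  rw [isUnit_iff_isUnit_det, det_of_isUpperTriangular hupper, IsUnit.prod_univ_iff] at hA
  exact hA i

theorem permMatrix_mul_mul_transpose [NonAssocSemiring R] (σ : Equiv.Perm ι) (A : Matrix ι ι R) :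
    σ.permMatrix R * A * (σ.permMatrix R)ᵀ = A.submatrix σ σ := by
  rw [transpose_permMatrix, Equiv.Perm.permMatrix, Equiv.Perm.permMatrix,
    PEquiv.toMatrix_toPEquiv_mul, PEquiv.mul_toMatrix_toPEquiv, submatrix_submatrix]
  rfl

theorem mulVec_add_single_add_apply [NonAssocRing R] (M : Matrix ι ι R) (v s : ι → R) (i : ι) :
    (M *ᵥ (v + Pi.single i 1 + s)) i = (M *ᵥ (v + s)) i + M i i := by
  rw [add_right_comm, mulVec_add, mulVec_single_one, Pi.add_apply, col_apply]

end Matrix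

/-- If `o v = M (v ⊕ s)` over GF(2) with `M = P A Pᵀ` for a permutation
matrix `P` and an invertible upper-triangular matrix `A`, then `o` is a valid
hypercube orientation: `o(v)_i ≠ o(v ⊕ e_i)_i` for all `v, i`. -/
theorem matousek_type_is_orientation (n : ℕ) (σ : Equiv.Perm (Fin n))
    (A : Matrix (Fin n) (Fin n) (ZMod 2))
    (hupper : ∀ i j : Fin n, j < i → A i j = 0)
    (hinv : IsUnit A)
    (s : Fin n → ZMod 2)
    (P : Matrix (Fin n) (Fin n) (ZMod 2)) (hP : P = σ.permMatrix (ZMod 2))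
    (M : Matrix (Fin n) (Fin n) (ZMod 2)) (hM : M = P * A * Pᵀ)
    (o : (Fin n → ZMod 2) → (Fin n → ZMod 2))
    (ho : ∀ v, o v = M.mulVec (v + s)) :
    ∀ (v : Fin n → ZMod 2) (i : Fin n),
      o v i ≠ o (v + Pi.single i 1) i := by
  intro v i
  have hdiag : M i i = A (σ i) (σ i) := by
    rw [hM, hP, permMatrix_mul_mul_transpose, submatrix_apply]
  rw [ho, ho, mulVec_add_single_add_apply, hdiag, ne_comm, Ne, add_eq_left]
  exact (isUnit_diag_of_isUnit_of_isUpperTriangular hinv hupper (σ i)).ne_zero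
end

section
/- Let A be an invertible upper-triangular n × n matrix over GF(2) and define the orientation o(v) = Av on the n-dimensional hypercube. Then o is a unique sink orientation: for every face of the hypercube (determined by fixing some coordinates and letting the rest vary), there is exactly one vertex v in the face with o(v)_i = 0 for all free coordinates i of the face. -/
/-!
The sinks of the face `(F, b)` are the solutions of one square linear system: `(A v)_i = 0` for
the free coordinates `i ∈ F` and `v_i = b_i` for the fixed ones. Its matrix takes the rows of `A`
at `F` and the rows of the identity elsewhere, so it is again upper triangular, with diagonal
entries `A i i` or `1`. These are units because `det A = ∏ i, A i i` is one, so the system matrix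
is invertible and the system has exactly one solution.
-/

open Matrix

namespace Matrix

variable {ι R : Type*} [DecidableEq ι] [CommRing R]

def faceMatrix (A : Matrix ι ι R) (F : Set ι) [DecidablePred (· ∈ F)] : Matrix ι ι R :=
  of fun i j => if i ∈ F then A i j else (1 : Matrix ι ι R) i j

theorem IsUpperTriangular.faceMatrix [Preorder ι] {A : Matrix ι ι R} {F : Set ι}
    [DecidablePred (· ∈ F)] (hA : A.IsUpperTriangular) :
    (A.faceMatrix F).IsUpperTriangular := by
  intro i j (hji : j < i)
  by_cases hi : i ∈ F
  · simp [Matrix.faceMatrix, hi, hA hji]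
  · simp [Matrix.faceMatrix, hi, one_apply_ne hji.ne']

variable [Fintype ι]

theorem isUnit_diag_of_isUpperTriangular [LinearOrder ι] {A : Matrix ι ι R}
    (hA : A.IsUpperTriangular) (hunit : IsUnit A) (i : ι) : IsUnit (A i i) := by
  rw [isUnit_iff_isUnit_det, det_of_isUpperTriangular hA, IsUnit.prod_univ_iff] at hunit
  exact hunit i

section Face

variable {A : Matrix ι ι R} {F : Set ι} [DecidablePred (· ∈ F)]

theorem isUnit_faceMatrix [LinearOrder ι] (hA : A.IsUpperTriangular) (hunit : IsUnit A) :
    IsUnit (A.faceMatrix F) := by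
  rw [isUnit_iff_isUnit_det, det_of_isUpperTriangular hA.faceMatrix, IsUnit.prod_univ_iff]
  intro i
  by_cases hi : i ∈ F
  · simpa [faceMatrix, hi] using isUnit_diag_of_isUpperTriangular hA hunit i
  · simp [faceMatrix, hi]

theorem faceMatrix_mulVec (v : ι → R) :
    A.faceMatrix F *ᵥ v = F.piecewise (A *ᵥ v) v := by
  ext i
  by_cases hi : i ∈ F <;> simp [faceMatrix, hi, mulVec, dotProduct, one_apply]

theorem faceMatrix_mulVec_eq_piecewise_zero_iff (v b : ι → R) :
    A.faceMatrix F *ᵥ v = F.piecewise (0 : ι → R) b ↔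
      (∀ i ∉ F, v i = b i) ∧ ∀ i ∈ F, (A *ᵥ v) i = 0 := by
  rw [faceMatrix_mulVec, funext_iff]
  refine ⟨fun h => ⟨fun i hi => ?_, fun i hi => ?_⟩, fun ⟨hout, hin⟩ i => ?_⟩
  · simpa [hi] using h i
  · simpa [hi] using h i
  · by_cases hi : i ∈ F <;> simp [hi, hout, hin]

end Face

theorem existsUnique_sink_of_isUpperTriangular [LinearOrder ι] {A : Matrix ι ι R}
    (hA : A.IsUpperTriangular) (hunit : IsUnit A) (F : Set ι) (b : ι → R) :
    ∃! v : ι → R, (∀ i ∉ F, v i = b i) ∧ ∀ i ∈ F, (A *ᵥ v) i = 0 := by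
  classical
  have hF : IsUnit (A.faceMatrix F) := isUnit_faceMatrix hA hunit
  simp_rw [← faceMatrix_mulVec_eq_piecewise_zero_iff]
  exact Function.Bijective.existsUnique
    ⟨mulVec_injective_of_isUnit hF, mulVec_surjective_iff_isUnit.mpr hF⟩ _

end Matrix

/-- For an invertible upper-triangular matrix `A` over GF(2), the
orientation `o v = A v` is a unique sink orientation: every face of the hypercube
(given by a set `F` of free coordinates and a base vertex `b`) contains exactly
one vertex `v` with `(A v)_i = 0` for all `i ∈ F`. -/
theorem matousek_uso_unique_sink (n : ℕ)
    (A : Matrix (Fin n) (Fin n) (ZMod 2))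
    (hupper : ∀ i j : Fin n, j < i → A i j = 0)
    (hinv : IsUnit A)
    (F : Set (Fin n)) (b : Fin n → ZMod 2) :
    ∃! v : Fin n → ZMod 2,
      (∀ i : Fin n, i ∉ F → v i = b i) ∧ (∀ i ∈ F, A.mulVec v i = 0) :=
  existsUnique_sink_of_isUpperTriangular (fun i j => hupper i j) hinv F b
end

section
/- Iterating the levelling step: define q⁰ = 1⃗ and q^{i+1} = q^i ⊙ ((M q^i) ⊕ q^i) (coordinatewise product over GF(2)). Then for every i ≥ 0 and every vertex v, q^i_v = 1 if and only if the binary representation of the level ℓ(v) of v has its bits 0 through i−1 all equal to 1, and ((M q^i) ⊕ q^i)_v = 1 if and only if the i-th bit of ℓ(v) equals 1. -/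
/-!
By induction on `i`, `q^i` is the indicator of "bits `0, …, i-1` of `ℓ(v)` are set", i.e. of
`2^i ∣ ℓ(v) + 1`. Since `M` has ones on the diagonal, `(M q + q)_v` is the sum of `q` over the
strict ancestors of `v`, whose levels are exactly `0, …, ℓ(v) - 1`. So it counts the `k < ℓ(v)`
with `2^i ∣ k + 1`, namely `⌊ℓ(v) / 2^i⌋`, whose parity is bit `i` of `ℓ(v)`.
-/

open Matrix

/-- `u` is a strict ancestor of `v` in the branching given by `parent`. -/
def IsAncestor {n : ℕ} (parent : Fin n → Option (Fin n)) (u v : Fin n) : Prop :=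
  Relation.TransGen (fun a b => parent b = some a) u v

open Finset

namespace Nat

theorem sum_range_ite_dvd_succ (p L : ℕ) :
    ∑ k ∈ range L, (if p ∣ k + 1 then 1 else 0) = L / p := by
  induction L with
  | zero => simp
  | succ L ih => rw [sum_range_succ, ih, Nat.succ_div]

theorem two_pow_dvd_succ_iff_testBit (i L : ℕ) :
    2 ^ i ∣ L + 1 ↔ ∀ j < i, L.testBit j := by
  have hlow : L % 2 ^ i = 2 ^ i - 1 ↔ ∀ j < i, L.testBit j := by
    refine ⟨fun h j hj => ?_, fun h => Nat.eq_of_testBit_eq fun j => ?_⟩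
    · simpa [hj] using congrArg (Nat.testBit · j) h
    · by_cases hj : j < i <;> simp [hj, h]
  rw [← hlow]
  nth_rewrite 1 [← Nat.div_add_mod L (2 ^ i)]
  rw [add_assoc, Nat.dvd_add_right (dvd_mul_right _ _)]
  have hlt := Nat.mod_lt L (Nat.two_pow_pos i)
  constructor
  · intro h
    have := Nat.le_of_dvd (Nat.succ_pos _) h
    omega
  · intro h
    rw [h, Nat.sub_add_cancel Nat.one_le_two_pow]

theorem cast_div_two_pow_eq_ite_testBit (L i : ℕ) :
    ((L / 2 ^ i : ℕ) : ZMod 2) = if L.testBit i then 1 else 0 := by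
  rw [Nat.testBit_eq_decide_div_mod_eq, ← ZMod.natCast_mod]
  rcases Nat.mod_two_eq_zero_or_one (L / 2 ^ i) with h | h <;> simp [h]

end Nat

section Ancestors

variable {n : ℕ} {parent : Fin n → Option (Fin n)} {lvl : Fin n → ℕ} {u v w : Fin n}

theorem IsAncestor.lvl_lt (hchild : ∀ v u, parent v = some u → lvl v = lvl u + 1)
    (h : IsAncestor parent u v) : lvl u < lvl v := by
  induction h with
  | single h => have := hchild _ _ h; omega
  | tail _ h _ => have := hchild _ _ h; omega

theorem not_isAncestor_self (hchild : ∀ v u, parent v = some u → lvl v = lvl u + 1) :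
    ¬IsAncestor parent v v :=
  fun h => (h.lvl_lt hchild).false

theorem isAncestor_iff_of_parent_eq_some (h : parent v = some u) :
    IsAncestor parent w v ↔ w = u ∨ IsAncestor parent w u := by
  rw [IsAncestor, Relation.TransGen.tail'_iff]
  simp only [h, Option.some.injEq, exists_eq_right', Relation.reflTransGen_iff_eq_or_transGen]
  exact or_congr_left eq_comm

open scoped Classical in
theorem sum_isAncestor_eq_sum_range {α : Type*} [AddCommMonoid α]
    (hroot : ∀ v, parent v = none → lvl v = 0)
    (hchild : ∀ v u, parent v = some u → lvl v = lvl u + 1) (f : ℕ → α) (v : Fin n) :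
    ∑ w with IsAncestor parent w v, f (lvl w) = ∑ k ∈ range (lvl v), f k := by
  induction hv : lvl v generalizing v with
  | zero =>
    rw [sum_range_zero, sum_eq_zero]
    intro w hw
    have := (mem_filter.1 hw).2.lvl_lt hchild
    omega
  | succ N ih =>
    obtain ⟨u, hu⟩ : ∃ u, parent v = some u := by
      cases h : parent v with
      | none => have := hroot v h; omega
      | some u => exact ⟨u, rfl⟩
    have hN : lvl u = N := by have := hchild v u hu; omega
    have hanc : univ.filter (IsAncestor parent · v) =
        insert u (univ.filter (IsAncestor parent · u)) := by
      ext w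
      simp [isAncestor_iff_of_parent_eq_some hu]
    rw [hanc, sum_insert (by simpa using not_isAncestor_self hchild), ih u hN, hN,
      sum_range_succ, add_comm]

end Ancestors

section Levelling

variable {n : ℕ} {parent : Fin n → Option (Fin n)} {lvl : Fin n → ℕ}
  {M : Matrix (Fin n) (Fin n) (ZMod 2)}

open scoped Classical in
theorem mulVec_add_self_apply_eq_sum_isAncestor
    (hchild : ∀ v u, parent v = some u → lvl v = lvl u + 1)
    (hM : ∀ v u, M v u = 1 ↔ (u = v ∨ IsAncestor parent u v)) (x : Fin n → ZMod 2) (v : Fin n) :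
    (M *ᵥ x + x) v = ∑ w with IsAncestor parent w v, x w := by
  have hterm : ∀ u, M v u * x u =
      (if u = v then x u else 0) + (if IsAncestor parent u v then x u else 0) := by
    intro u
    by_cases huv : u = v
    · subst huv
      simp [(hM u u).2 (Or.inl rfl), not_isAncestor_self hchild]
    by_cases hanc : IsAncestor parent u v
    · simp [huv, hanc, (hM v u).2 (Or.inr hanc)]
    · have hzero : M v u = 0 := by
        have : ∀ a : ZMod 2, a ≠ 1 → a = 0 := by decide
        exact this _ fun h => by simp_all
      simp [huv, hanc, hzero]
  -- the diagonal term `x v` cancels against `+ x` in characteristic 2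
  rw [Pi.add_apply, mulVec, dotProduct, sum_congr rfl fun u _ => hterm u, sum_add_distrib,
    sum_ite_eq', if_pos (mem_univ v), ← sum_filter, add_comm, ← add_assoc,
    CharTwo.add_self_eq_zero, zero_add]

theorem mulVec_add_self_apply_eq_ite_testBit
    (hroot : ∀ v, parent v = none → lvl v = 0)
    (hchild : ∀ v u, parent v = some u → lvl v = lvl u + 1)
    (hM : ∀ v u, M v u = 1 ↔ (u = v ∨ IsAncestor parent u v)) {i : ℕ} {x : Fin n → ZMod 2}
    (hx : ∀ w, x w = if ∀ j < i, (lvl w).testBit j then 1 else 0) (v : Fin n) :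
    (M *ᵥ x + x) v = if (lvl v).testBit i then 1 else 0 := by
  simp_rw [mulVec_add_self_apply_eq_sum_isAncestor hchild hM, hx,
    sum_isAncestor_eq_sum_range hroot hchild
      (fun k => if ∀ j < i, k.testBit j then (1 : ZMod 2) else 0),
    ← Nat.two_pow_dvd_succ_iff_testBit, ← Nat.cast_div_two_pow_eq_ite_testBit,
    ← Nat.sum_range_ite_dvd_succ, Nat.cast_sum, Nat.cast_ite, Nat.cast_one, Nat.cast_zero]

end Levelling

/-- Iterating the levelling step `q⁰ = 1⃗`,
`q^{i+1} = q^i ⊙ ((M q^i) ⊕ q^i)`, for every `i` and vertex `v`: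
`q^i_v = 1` iff bits `0, …, i-1` of the level of `v` are all `1`, and
`((M q^i) ⊕ q^i)_v = 1` iff bit `i` of the level of `v` is `1`. -/
theorem levelling_iterated (n : ℕ) (parent : Fin n → Option (Fin n))
    (lvl : Fin n → ℕ)
    (hroot : ∀ v : Fin n, parent v = none → lvl v = 0)
    (hchild : ∀ v u : Fin n, parent v = some u → lvl v = lvl u + 1)
    (M : Matrix (Fin n) (Fin n) (ZMod 2))
    (hM : ∀ v u : Fin n, M v u = 1 ↔ (u = v ∨ IsAncestor parent u v))
    (q : ℕ → Fin n → ZMod 2)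
    (hq0 : ∀ v, q 0 v = 1)
    (hqsucc : ∀ i v, q (i + 1) v = q i v * (M.mulVec (q i) + q i) v) :
    ∀ (i : ℕ) (v : Fin n),
      (q i v = 1 ↔ ∀ j < i, Nat.testBit (lvl v) j = true) ∧
      ((M.mulVec (q i) + q i) v = 1 ↔ Nat.testBit (lvl v) i = true) := by
  have hq : ∀ i v, q i v = if ∀ j < i, (lvl v).testBit j then 1 else 0 := by
    intro i
    induction i with
    | zero => simp [hq0]
    | succ i ih =>
      intro v
      rw [hqsucc, ih, mulVec_add_self_apply_eq_ite_testBit hroot hchild hM ih,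
        ite_zero_mul_ite_zero, one_mul]
      simp only [Nat.forall_lt_succ_right]
  intro i v
  rw [hq, mulVec_add_self_apply_eq_ite_testBit hroot hchild hM (hq i)]
  simp
end
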